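/- arXiv:1402.5494 — 4 statements merged into one kernel-verified Lean document; each statement's English description precedes it below -/
import Mathlib

section
/- Let G be a finite group, C a union of G-conjugacy classes, m the exponent of G (the lcm of the orders of elements of G), and K a field with ℚ ≤ K ≤ ℚ(ζ_m). Then every eigenvalue of Cay(G,C) lies in K if and only if C is a union of Γ_K-conjugacy classes. -/
/-!
Write `A = ∑_{g ∈ C} ρ g` and `Aₜ = ∑_{g ∈ C} ρ (g ^ t)` for a complex representation `ρ` of `G`.
Each `ρ g` is diagonalisable with `m`-th roots of unity as eigenvalues, so on every
subrepresentation the trace of `A` lies in `ℚ(ζ)` and the automorphism `ζ ↦ ζ ^ t` sends it to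
the trace of `Aₜ`. As `C` is closed under conjugation, `A` and `Aₜ` commute with `ρ` and act as
scalars on irreducible subrepresentations. Hence if the spectrum of `A` lies in `K`, then `A` and
`Aₜ` agree on each irreducible subrepresentation for `t ∈ Γ_K`, so `Aₜ = A` by Maschke's theorem;
conversely, if `Aₜ = A` for all `t ∈ Γ_K`, the trace `μ · dim` of `A` on its `μ`-eigenspace is
fixed by `Gal(ℚ(ζ)/K ∩ ℚ(ζ))`, so `μ ∈ K`. For the left regular representation, `Aₜ = A` means
exactly that `g ↦ g ^ t` maps `C` into itself.
-/

noncomputable section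
open IntermediateField

/-- The adjacency matrix of the Cayley digraph `Cay(G, C)`. -/
def cayleyAdj {G : Type*} [Group G] [Fintype G] [DecidableEq G] (C : Finset G) :
    Matrix G G ℂ := fun g h => if g * h⁻¹ ∈ C then 1 else 0

/-- `t` lies in `Γ_K`: there is an automorphism of `ℚ(ζ)` fixing `K` pointwise and sending
`ζ` to `ζ ^ t`. -/
def GammaK (ζ : ℂ) (K : IntermediateField ℚ ℂ) (t : ℕ) : Prop :=
  ∃ σ : ℚ⟮ζ⟯ ≃ₐ[ℚ] ℚ⟮ζ⟯,
    (∀ (x : ℂ) (hx : x ∈ ℚ⟮ζ⟯), x ∈ K → (σ ⟨x, hx⟩ : ℂ) = x) ∧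
    (σ ⟨ζ, IntermediateField.mem_adjoin_simple_self ℚ ζ⟩ : ℂ) = ζ ^ t

/-- `g` and `h` are `Γ_K`-conjugate if `g` is conjugate in `G` to `h ^ t` for some `t ∈ Γ_K`. -/
def GammaConj {G : Type*} [Group G] (ζ : ℂ) (K : IntermediateField ℚ ℂ) (g h : G) : Prop :=
  ∃ t : ℕ, GammaK ζ K t ∧ IsConj g (h ^ t)

open Module End

theorem Module.End.exists_trace_pow_eq_sum_of_pow_eq_one {k V : Type*} [Field k] [IsAlgClosed k]
    [AddCommGroup V] [Module k V] [FiniteDimensional k V] {m : ℕ} [NeZero (m : k)]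
    {f : End k V} (hf : f ^ m = 1) :
    ∃ (S : Finset k) (n : k → ℕ), (∀ μ ∈ S, μ ^ m = 1) ∧
      ∀ t : ℕ, LinearMap.trace k V (f ^ t) = ∑ μ ∈ S, n μ * μ ^ t := by
  classical
  have hss : f.IsSemisimple :=
    isSemisimple_of_squarefree_aeval_eq_zero
      (Polynomial.X_pow_sub_one_separable_iff.mpr (NeZero.ne (m : k))).squarefree (by simp [hf])
  have hint : DirectSum.IsInternal f.eigenspace :=
    (DirectSum.isInternal_submodule_iff_iSupIndep_and_iSup_eq_top _).mpr
      ⟨f.eigenspaces_iSupIndep, hss.iSup_eigenspace_eq_top⟩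
  have hfin : {μ | f.eigenspace μ ≠ ⊥}.Finite := f.finite_hasEigenvalue
  refine ⟨hfin.toFinset, fun μ => finrank k (f.eigenspace μ), fun μ hμ => ?_, fun t => ?_⟩
  · obtain ⟨v, hv⟩ :=
      (hasEigenvalue_iff.mpr ((Set.Finite.mem_toFinset hfin).mp hμ)).exists_hasEigenvector
    have := hv.pow_apply m
    rw [hf, one_apply] at this
    exact (smul_left_injective k hv.2).eq_iff.mp (this.symm.trans (one_smul k v).symm)
  · have hmaps : ∀ μ, Set.MapsTo (f ^ t) (f.eigenspace μ) (f.eigenspace μ) := fun μ =>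
      mapsTo_genEigenspace_of_comm (Commute.self_pow f t) μ 1
    rw [LinearMap.trace_eq_sum_trace_restrict' hint hfin hmaps]
    refine Finset.sum_congr rfl fun μ _ => ?_
    have : (f ^ t).restrict (hmaps μ) = μ ^ t • 1 := by
      ext ⟨v, hv⟩
      change (f ^ t) v = μ ^ t • v
      rcases eq_or_ne v 0 with rfl | hv0
      · simp
      · exact HasEigenvector.pow_apply ⟨hv, hv0⟩ t
    rw [this, map_smul, LinearMap.trace_one, smul_eq_mul, mul_comm]

theorem IntermediateField.coe_mem_of_forall_algEquiv_apply_eq {F Ω : Type*} [Field F] [Field Ω]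
    [Algebra F Ω] {L : IntermediateField F Ω} [FiniteDimensional F L] [IsGalois F L]
    (K : IntermediateField F Ω) {x : L}
    (hx : ∀ σ : L ≃ₐ[F] L, (∀ y : L, (y : Ω) ∈ K → σ y = y) → σ x = x) : (x : Ω) ∈ K := by
  have : x ∈ fixedField (fixingSubgroup (K.comap L.val)) := fun σ =>
    hx σ fun y hy => σ.2 ⟨y, hy⟩
  rwa [IsGalois.fixedField_fixingSubgroup] at this

theorem IsPrimitiveRoot.finiteDimensional_isGalois_adjoin {F Ω : Type*} [Field F] [Field Ω]
    [Algebra F Ω] {ζ : Ω} {m : ℕ} [NeZero (m : F)] (hζ : IsPrimitiveRoot ζ m) :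
    FiniteDimensional F F⟮ζ⟯ ∧ IsGalois F F⟮ζ⟯ := by
  have := NeZero.of_neZero_natCast F (n := m)
  have : IsCyclotomicExtension {m} F F⟮ζ⟯ := by
    change IsCyclotomicExtension {m} F F⟮ζ⟯.toSubalgebra
    rw [adjoin_simple_toSubalgebra_of_isAlgebraic
      (hζ.isIntegral (NeZero.pos m)).tower_top.isAlgebraic]
    exact hζ.adjoin_isCyclotomicExtension F
  exact ⟨IsCyclotomicExtension.finiteDimensional {m} F F⟮ζ⟯,
    IsCyclotomicExtension.isGalois {m} F F⟮ζ⟯⟩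

section Cyclotomic

variable {ζ : ℂ} {m : ℕ} [NeZero m] (hζ : IsPrimitiveRoot ζ m)
include hζ

theorem IsPrimitiveRoot.exists_coe_algEquiv_apply_eq_pow (σ : ℚ⟮ζ⟯ ≃ₐ[ℚ] ℚ⟮ζ⟯) :
    ∃ t : ℕ, (σ ⟨ζ, mem_adjoin_simple_self ℚ ζ⟩ : ℂ) = ζ ^ t := by
  have : (σ ⟨ζ, mem_adjoin_simple_self ℚ ζ⟩ : ℂ) ^ m = 1 := by
    have hζm : (⟨ζ, mem_adjoin_simple_self ℚ ζ⟩ : ℚ⟮ζ⟯) ^ m = 1 := Subtype.ext hζ.pow_eq_one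
    rw [← SubmonoidClass.coe_pow, ← map_pow, hζm, map_one]
    rfl
  obtain ⟨t, -, ht⟩ := hζ.eq_pow_of_pow_eq_one this
  exact ⟨t, ht.symm⟩

theorem IsPrimitiveRoot.exists_trace_eq_of_pow_eq_one (σ : ℚ⟮ζ⟯ ≃ₐ[ℚ] ℚ⟮ζ⟯) {t : ℕ}
    (hσ : (σ ⟨ζ, mem_adjoin_simple_self ℚ ζ⟩ : ℂ) = ζ ^ t)
    {V : Type*} [AddCommGroup V] [Module ℂ V] [FiniteDimensional ℂ V]
    {f : End ℂ V} (hf : f ^ m = 1) :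
    ∃ x : ℚ⟮ζ⟯, (x : ℂ) = LinearMap.trace ℂ V f ∧ (σ x : ℂ) = LinearMap.trace ℂ V (f ^ t) := by
  obtain ⟨S, n, hS, htr⟩ := exists_trace_pow_eq_sum_of_pow_eq_one hf
  have : ∀ μ ∈ S, ∃ j, ζ ^ j = μ := fun μ hμ =>
    (hζ.eq_pow_of_pow_eq_one (hS μ hμ)).imp fun _ h => h.2
  choose! j hj using this
  refine ⟨∑ μ ∈ S, n μ * ⟨ζ, mem_adjoin_simple_self ℚ ζ⟩ ^ j μ, ?_, ?_⟩
  · rw [← pow_one f, htr 1]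
    push_cast
    exact Finset.sum_congr rfl fun μ hμ => by rw [hj μ hμ, pow_one]
  · rw [htr t]
    simp only [map_sum, map_mul, map_natCast, map_pow]
    push_cast
    rw [hσ]
    exact Finset.sum_congr rfl fun μ hμ => by rw [← pow_mul, mul_comm t, pow_mul, hj μ hμ]

theorem GammaK.exists_mul_modEq_one {K : IntermediateField ℚ ℂ} {t : ℕ} (ht : GammaK ζ K t) :
    ∃ t', GammaK ζ K t' ∧ t * t' ≡ 1 [MOD m] := by
  obtain ⟨σ, hσK, hσ⟩ := ht
  obtain ⟨t', ht'⟩ := hζ.exists_coe_algEquiv_apply_eq_pow σ.symm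
  refine ⟨t', ⟨σ.symm, fun x hx hxK => ?_, ht'⟩, ?_⟩
  · have : σ ⟨x, hx⟩ = ⟨x, hx⟩ := Subtype.ext (hσK x hx hxK)
    exact congrArg Subtype.val (σ.symm_apply_eq.mpr this.symm)
  · have hsymm : σ.symm ⟨ζ, mem_adjoin_simple_self ℚ ζ⟩ = ⟨ζ, mem_adjoin_simple_self ℚ ζ⟩ ^ t' :=
      Subtype.ext ht'
    have : ζ ^ (t * t') = ζ ^ 1 := by
      rw [pow_one, pow_mul, ← hσ, ← SubmonoidClass.coe_pow, ← map_pow, ← hsymm,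
        AlgEquiv.apply_symm_apply]
    rwa [(hζ.isOfFinOrder (NeZero.ne m)).pow_eq_pow_iff_modEq, ← hζ.eq_orderOf] at this

end Cyclotomic

namespace Representation

variable {k G V : Type*} [Field k] [Group G] [AddCommGroup V] [Module k V]
  (ρ : Representation k G V)

theorem commute_sum_pow_of_conj_mem {X : Finset G} (hX : ∀ g ∈ X, ∀ h : G, h * g * h⁻¹ ∈ X)
    (t : ℕ) (h : G) : Commute (∑ g ∈ X, ρ (g ^ t)) (ρ h) := by
  have hsum : ∑ g ∈ X, ρ (h * g ^ t) = ∑ g ∈ X, ρ (g ^ t * h) :=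
    Finset.sum_nbij' (fun g => h * g * h⁻¹) (fun g => h⁻¹ * g * h)
      (fun g hg => hX g hg h) (fun g hg => by simpa using hX g hg h⁻¹)
      (fun g _ => by group) (fun g _ => by group)
      (fun g _ => by rw [conj_pow, inv_mul_cancel_right])
  simp only [Commute, SemiconjBy, Finset.sum_mul, Finset.mul_sum, ← map_mul]
  exact hsum.symm

theorem commute_sum_of_conj_mem {X : Finset G} (hX : ∀ g ∈ X, ∀ h : G, h * g * h⁻¹ ∈ X)
    (h : G) : Commute (∑ g ∈ X, ρ g) (ρ h) := by
  simpa using ρ.commute_sum_pow_of_conj_mem hX 1 h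

def eigenSubrepresentation {A : End k V} (hA : ∀ g, Commute A (ρ g)) (μ : k) :
    Subrepresentation ρ where
  toSubmodule := A.eigenspace μ
  apply_mem_toSubmodule g _ hv := mapsTo_genEigenspace_of_comm (hA g) μ 1 hv

theorem exists_eq_smul_of_isAtom [IsAlgClosed k] [FiniteDimensional k V]
    {W : Subrepresentation ρ} (hW : IsAtom W) {A : End k V} (hA : ∀ g, Commute A (ρ g))
    (hAW : Set.MapsTo A W W) : ∃ μ : k, ∀ w ∈ W, A w = μ • w := by
  have : Nontrivial W.toSubmodule := Submodule.nontrivial_iff_ne_bot.mpr fun h =>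
    hW.1 (Subrepresentation.toSubmodule_injective h)
  obtain ⟨μ, hμ⟩ := exists_eigenvalue (A.restrict hAW)
  obtain ⟨w, hw⟩ := hμ.exists_hasEigenvector
  have hle : W ⊓ ρ.eigenSubrepresentation hA μ = W := by
    refine (hW.le_iff.mp inf_le_left).resolve_left fun hbot => hw.2 (Subtype.ext ?_)
    have : (w : V) ∈ W ⊓ ρ.eigenSubrepresentation hA μ :=
      ⟨w.2, mem_eigenspace_iff.mpr (congrArg Subtype.val hw.apply_eq_smul)⟩
    rw [hbot] at this
    exact this
  exact ⟨μ, fun v hv => mem_eigenspace_iff.mp (inf_eq_left.mp hle hv)⟩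

theorem eq_zero_of_forall_isAtom [Finite G] [CharZero k] [FiniteDimensional k V] {D : End k V}
    (hD : ∀ g, Commute D (ρ g)) (h : ∀ W : Subrepresentation ρ, IsAtom W → ∀ w ∈ W, D w = 0) :
    D = 0 := by
  have : WellFoundedLT (Subrepresentation ρ) :=
    StrictMono.wellFoundedLT (f := Subrepresentation.toSubmodule) fun _ _ h => h
  have : IsAtomic (Subrepresentation ρ) := isAtomic_of_orderBot_wellFounded_lt wellFounded_lt
  set P := ρ.eigenSubrepresentation hD 0
  obtain ⟨Q, hQ⟩ := exists_isCompl P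
  obtain hQ0 | ⟨W, hW, hWQ⟩ := eq_bot_or_exists_atom_le Q
  · have hP : P = ⊤ := eq_top_of_isCompl_bot (hQ0 ▸ hQ)
    ext v
    have hv : v ∈ P := hP ▸ Submodule.mem_top (R := k) (x := v)
    simpa using mem_eigenspace_iff.mp hv
  · have hWP : W ≤ P := fun w hw => mem_eigenspace_iff.mpr (by simpa using h W hW w hw)
    exact (hW.1 (le_bot_iff.mp (hQ.disjoint hWP hWQ))).elim

theorem sum_apply_mem (W : Subrepresentation ρ) (X : Finset G) (f : G → G) {w : V}
    (hw : w ∈ W) : (∑ g ∈ X, ρ (f g)) w ∈ W := by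
  rw [LinearMap.sum_apply]
  exact W.toSubmodule.sum_mem fun g _ => W.apply_mem_toSubmodule (f g) hw

theorem trace_sum_toRepresentation (W : Subrepresentation ρ) (X : Finset G) (f : G → G) {μ : k}
    (hμ : ∀ w ∈ W, (∑ g ∈ X, ρ (f g)) w = μ • w) [FiniteDimensional k W.toSubmodule] :
    LinearMap.trace k W.toSubmodule (∑ g ∈ X, W.toRepresentation (f g)) =
      μ * finrank k W.toSubmodule := by
  have : ∑ g ∈ X, W.toRepresentation (f g) = μ • 1 := by
    ext ⟨w, hw⟩
    simpa [Subrepresentation.toRepresentation] using hμ w hw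
  rw [this, map_smul, LinearMap.trace_one, smul_eq_mul]

end Representation

section GaloisAction

variable {ζ : ℂ} {m : ℕ} [NeZero m] (hζ : IsPrimitiveRoot ζ m)
  {G V : Type*} [Group G] [AddCommGroup V] [Module ℂ V] [FiniteDimensional ℂ V]
  (ρ : Representation ℂ G V) (hG : ∀ g : G, g ^ m = 1)
include hζ hG

namespace Representation

theorem exists_trace_sum_eq (σ : ℚ⟮ζ⟯ ≃ₐ[ℚ] ℚ⟮ζ⟯) {t : ℕ}
    (hσ : (σ ⟨ζ, mem_adjoin_simple_self ℚ ζ⟩ : ℂ) = ζ ^ t) (X : Finset G) :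
    ∃ x : ℚ⟮ζ⟯, (x : ℂ) = LinearMap.trace ℂ V (∑ g ∈ X, ρ g) ∧
      (σ x : ℂ) = LinearMap.trace ℂ V (∑ g ∈ X, ρ (g ^ t)) := by
  have : ∀ g : G, ∃ x : ℚ⟮ζ⟯, (x : ℂ) = LinearMap.trace ℂ V (ρ g) ∧
      (σ x : ℂ) = LinearMap.trace ℂ V (ρ (g ^ t)) := fun g => by
    rw [map_pow]
    exact hζ.exists_trace_eq_of_pow_eq_one σ hσ (by rw [← map_pow, hG, map_one])
  choose x hx hσx using this
  exact ⟨∑ g ∈ X, x g, by simp [hx], by simp [hσx]⟩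

theorem exists_mul_finrank_eq (σ : ℚ⟮ζ⟯ ≃ₐ[ℚ] ℚ⟮ζ⟯) {t : ℕ}
    (hσ : (σ ⟨ζ, mem_adjoin_simple_self ℚ ζ⟩ : ℂ) = ζ ^ t) (W : Subrepresentation ρ)
    (X : Finset G) {μ ν : ℂ} (hμ : ∀ w ∈ W, (∑ g ∈ X, ρ g) w = μ • w)
    (hν : ∀ w ∈ W, (∑ g ∈ X, ρ (g ^ t)) w = ν • w) :
    ∃ x : ℚ⟮ζ⟯, (x : ℂ) = μ * finrank ℂ W.toSubmodule ∧
      (σ x : ℂ) = ν * finrank ℂ W.toSubmodule := by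
  obtain ⟨x, hx, hσx⟩ := W.toRepresentation.exists_trace_sum_eq hζ hG σ hσ X
  exact ⟨x, hx.trans (ρ.trace_sum_toRepresentation W X id hμ),
    hσx.trans (ρ.trace_sum_toRepresentation W X (· ^ t) hν)⟩

variable {C : Finset G} (hC : ∀ g ∈ C, ∀ h : G, h * g * h⁻¹ ∈ C) (K : IntermediateField ℚ ℂ)
include hC

theorem sum_pow_eq_sum_of_spectrum_subset [Finite G]
    (hspec : ∀ μ ∈ spectrum ℂ (∑ g ∈ C, ρ g), μ ∈ K) {t : ℕ} (ht : GammaK ζ K t) :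
    ∑ g ∈ C, ρ (g ^ t) = ∑ g ∈ C, ρ g := by
  obtain ⟨σ, hσK, hσ⟩ := ht
  have hA := ρ.commute_sum_of_conj_mem hC
  have hB := ρ.commute_sum_pow_of_conj_mem hC t
  refine sub_eq_zero.mp (ρ.eq_zero_of_forall_isAtom (fun h => (hB h).sub_left (hA h))
    fun W hW w hw => ?_)
  obtain ⟨μ, hμ⟩ := ρ.exists_eq_smul_of_isAtom hW hA fun w => ρ.sum_apply_mem W C id
  obtain ⟨ν, hν⟩ := ρ.exists_eq_smul_of_isAtom hW hB fun w => ρ.sum_apply_mem W C (· ^ t)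
  have hW0 : W.toSubmodule ≠ ⊥ := fun h => hW.1 (Subrepresentation.toSubmodule_injective h)
  have hμK : μ ∈ K := by
    obtain ⟨w₀, hw₀, hw₀0⟩ := Submodule.exists_mem_ne_zero_of_ne_bot hW0
    exact hspec μ (hasEigenvalue_of_hasEigenvector
      ⟨mem_eigenspace_iff.mpr (hμ w₀ hw₀), hw₀0⟩).mem_spectrum
  obtain ⟨x, hx, hσx⟩ := ρ.exists_mul_finrank_eq hζ hG σ hσ W C hμ hν
  have hσxx : (σ x : ℂ) = x := hσK x x.2 (hx ▸ K.mul_mem hμK (_root_.natCast_mem K _))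
  have hνμ : ν = μ := mul_right_cancel₀ (by simpa using hW0) (hσx.symm.trans (hσxx.trans hx))
  rw [LinearMap.sub_apply, hν w hw, hμ w hw, hνμ, sub_self]

theorem mem_of_mem_spectrum_sum
    (hC' : ∀ t, GammaK ζ K t → ∑ g ∈ C, ρ (g ^ t) = ∑ g ∈ C, ρ g)
    {μ : ℂ} (hμ : μ ∈ spectrum ℂ (∑ g ∈ C, ρ g)) : μ ∈ K := by
  obtain ⟨_, _⟩ := hζ.finiteDimensional_isGalois_adjoin (F := ℚ)
  have hA := ρ.commute_sum_of_conj_mem hC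
  set W := ρ.eigenSubrepresentation hA μ
  have hWμ : ∀ w ∈ W, (∑ g ∈ C, ρ g) w = μ • w := fun w hw => mem_eigenspace_iff.mp hw
  have hW0 : W.toSubmodule ≠ ⊥ := hasEigenvalue_iff_mem_spectrum.mpr hμ
  have hd : (finrank ℂ W.toSubmodule : ℂ) ≠ 0 := by simpa using hW0
  obtain ⟨x, hx, -⟩ := ρ.exists_mul_finrank_eq hζ hG .refl (pow_one ζ).symm W C hWμ
    (by simpa using hWμ)
  have hxK : (x : ℂ) ∈ K := coe_mem_of_forall_algEquiv_apply_eq K fun σ hσK => by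
    obtain ⟨t, hσ⟩ := hζ.exists_coe_algEquiv_apply_eq_pow σ
    have ht : GammaK ζ K t := ⟨σ, fun y hy hyK => congrArg Subtype.val (hσK ⟨y, hy⟩ hyK), hσ⟩
    obtain ⟨y, hy, hσy⟩ := ρ.exists_mul_finrank_eq hζ hG σ hσ W C hWμ (hC' t ht ▸ hWμ)
    obtain rfl : y = x := Subtype.ext (hy.trans hx.symm)
    exact Subtype.ext (hσy.trans hx.symm)
  rw [eq_div_of_mul_eq hd hx.symm]
  exact K.div_mem hxK (_root_.natCast_mem K _)

theorem forall_mem_spectrum_sum_mem_iff [Finite G] :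
    (∀ μ ∈ spectrum ℂ (∑ g ∈ C, ρ g), μ ∈ K) ↔
      ∀ t, GammaK ζ K t → ∑ g ∈ C, ρ (g ^ t) = ∑ g ∈ C, ρ g :=
  ⟨fun h _ => ρ.sum_pow_eq_sum_of_spectrum_subset hζ hG hC K h,
    fun h _ => ρ.mem_of_mem_spectrum_sum hζ hG hC K h⟩

end Representation

end GaloisAction

section Cayley

variable {G : Type*} [Group G]

variable (G) in
def leftTranslation : Representation ℂ G (G → ℂ) where
  toFun g := LinearMap.funLeft ℂ ℂ (g⁻¹ * ·)
  map_one' := by ext; simp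
  map_mul' g h := by ext; simp [mul_assoc]

theorem leftTranslation_apply (g : G) (v : G → ℂ) (x : G) :
    leftTranslation G g v x = v (g⁻¹ * x) := rfl

variable [DecidableEq G]

theorem pow_mem_of_sum_leftTranslation_pow_eq {C : Finset G} {t : ℕ}
    (h : ∑ g ∈ C, leftTranslation G (g ^ t) = ∑ g ∈ C, leftTranslation G g) {g : G}
    (hg : g ∈ C) : g ^ t ∈ C := by
  -- at `Pi.single 1 1` and `g ^ t`, the left side counts the `c ∈ C` with `c ^ t = g ^ t`
  have := congrFun (LinearMap.congr_fun h (Pi.single 1 1)) (g ^ t)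
  simp only [LinearMap.sum_apply, Finset.sum_apply, leftTranslation_apply, Pi.single_apply,
    inv_mul_eq_one, Finset.sum_boole, Nat.cast_inj] at this
  obtain ⟨x, hx⟩ := Finset.card_pos.mp (this ▸ Finset.card_pos.mpr ⟨g, by simp [hg]⟩)
  rw [Finset.mem_filter] at hx
  exact hx.2 ▸ hx.1

variable [Fintype G]

theorem toLin'_cayleyAdj (C : Finset G) :
    Matrix.toLin' (cayleyAdj C) = ∑ c ∈ C, leftTranslation G c := by
  refine LinearMap.ext fun v => funext fun x => ?_
  simp only [Matrix.toLin'_apply, Matrix.mulVec, dotProduct, cayleyAdj, ite_mul, one_mul,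
    zero_mul, LinearMap.sum_apply, Finset.sum_apply, leftTranslation_apply]
  rw [← Finset.sum_filter]
  exact Finset.sum_nbij' (fun y => x * y⁻¹) (fun c => c⁻¹ * x) (by simp) (by simp) (by simp)
    (by simp) (by simp)

end Cayley

theorem stmt1_general {G : Type*} [Group G] [Fintype G] [DecidableEq G] (C : Finset G)
    (hC : ∀ g ∈ C, ∀ h : G, h * g * h⁻¹ ∈ C)
    (ζ : ℂ) (hζ : IsPrimitiveRoot ζ (Monoid.exponent G))
    (K : IntermediateField ℚ ℂ) :
    (∀ μ ∈ spectrum ℂ (cayleyAdj C), μ ∈ K) ↔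
      (∀ g ∈ C, ∀ h : G, GammaConj ζ K h g → h ∈ C) := by
  rw [← Matrix.spectrum_toLin', toLin'_cayleyAdj,
    (leftTranslation G).forall_mem_spectrum_sum_mem_iff hζ Monoid.pow_exponent_eq_one hC K]
  have hinv : ∀ a b : ℕ, a * b ≡ 1 [MOD Monoid.exponent G] → ∀ x : G, (x ^ a) ^ b = x :=
    fun a b hab x => by
      rw [← pow_mul, pow_eq_pow_of_modEq hab (Monoid.pow_exponent_eq_one x), pow_one]
  constructor
  · rintro h g hg x ⟨t, ht, hx⟩
    obtain ⟨c, rfl⟩ := isConj_iff.mp hx.symm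
    exact hC _ (pow_mem_of_sum_leftTranslation_pow_eq (h t ht) hg) c
  · intro h t ht
    obtain ⟨t', ht', htt'⟩ := ht.exists_mul_modEq_one hζ
    exact Finset.sum_nbij' (· ^ t) (· ^ t') (fun g hg => h g hg _ ⟨t, ht, .refl _⟩)
      (fun g hg => h g hg _ ⟨t', ht', .refl _⟩) (fun g _ => hinv t t' htt' g)
      (fun g _ => hinv t' t (mul_comm t t' ▸ htt') g) fun _ _ => rfl

/-- Theorem 2: all eigenvalues of `Cay(G, C)` lie in `K` iff `C` is a union of
`Γ_K`-conjugacy classes. -/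
theorem stmt1 {G : Type*} [Group G] [Fintype G] [DecidableEq G] (C : Finset G)
    (hC : ∀ g ∈ C, ∀ h : G, h * g * h⁻¹ ∈ C)
    (ζ : ℂ) (hζ : IsPrimitiveRoot ζ (Monoid.exponent G))
    (K : IntermediateField ℚ ℂ) (hK : K ≤ ℚ⟮ζ⟯) :
    (∀ μ ∈ spectrum ℂ (cayleyAdj C), μ ∈ K) ↔
      (∀ g ∈ C, ∀ h : G, GammaConj ζ K h g → h ∈ C) :=
  stmt1_general C hC ζ hζ K
end
end

section
/- Let G be a finite abelian group and C ⊆ G. Then every eigenvalue of Cay(G,C) is an integer if and only if C is power-closed (equivalently, C is closed under x ↦ x^t for all t coprime to the exponent of G). -/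
/-!
The Cayley matrix is diagonalised by the characters of `G`: the eigenvalue belonging to `χ` is
`∑ c ∈ C, χ c`. Write `χ c = ω ^ a c` for a primitive `n`-th root of unity `ω`, `n` the exponent
of `G`, so that this eigenvalue is `f(ω)` with `f = ∑ c ∈ C, X ^ a c` and `f(ω ^ t)` is the
character sum of `C ^ t`. A polynomial over `ℚ` takes a rational value at `ω` iff it is constant
on the primitive `n`-th roots, since these are exactly the `φ n` roots of the irreducible
polynomial `cyclotomic n ℚ`. As character sums are algebraic integers and determine the set,
all eigenvalues are integers iff `C ^ t = C` for every `t` prime to `n`, which is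
power-closedness.
-/

def IsPowerClosed {G : Type*} [Group G] (C : Finset G) : Prop :=
  ∀ x ∈ C, ∀ y : G, y ∈ Subgroup.zpowers x → Subgroup.zpowers y = Subgroup.zpowers x → y ∈ C

open Matrix Monoid Polynomial Subgroup

theorem Int.exists_gcd_eq_one_modEq {m n : ℕ} [NeZero n] (hmn : m ∣ n) {k : ℤ}
    (hk : k.gcd m = 1) : ∃ t : ℤ, t.gcd n = 1 ∧ t ≡ k [ZMOD m] := by
  have hu : IsUnit (k : ZMod m) := (ZMod.coe_int_isUnit_iff_isCoprime k m).mpr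
    (isCoprime_comm.mp (Int.isCoprime_iff_gcd_eq_one.mpr hk))
  obtain ⟨v, hv⟩ := ZMod.unitsMap_surjective hmn hu.unit
  refine ⟨((v : ZMod n).val : ℤ), ?_, ?_⟩
  · rw [Int.gcd_natCast_natCast]
    exact ZMod.val_coe_unit_coprime v
  · rw [← ZMod.intCast_eq_intCast_iff, Int.cast_natCast, ← ZMod.cast_eq_val]
    simpa [ZMod.unitsMap_val] using congr_arg Units.val hv

section PowerClosed

variable {G : Type*} [Group G]

theorem zpowers_zpow_eq_zpowers_iff {x : G} {k : ℤ} :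
    zpowers (x ^ k) = zpowers x ↔ k.gcd (orderOf x) = 1 := by
  rw [← mem_zpowers_zpow_iff, ← zpowers_le, le_antisymm_iff,
    and_iff_right (zpowers_le.mpr (zpow_mem_zpowers x k))]

theorem zpowers_eq_zpowers_iff_exists_zpow [Finite G] {x y : G} :
    zpowers y = zpowers x ↔ ∃ t : ℤ, t.gcd (exponent G) = 1 ∧ x ^ t = y := by
  constructor
  · intro h
    obtain ⟨k, rfl⟩ := mem_zpowers_iff.mp (h ▸ mem_zpowers y)
    have : NeZero (exponent G) := ⟨exponent_ne_zero_of_finite⟩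
    obtain ⟨t, ht, hmod⟩ := Int.exists_gcd_eq_one_modEq (order_dvd_exponent x)
      (zpowers_zpow_eq_zpowers_iff.mp h)
    exact ⟨t, ht, zpow_eq_zpow_iff_modEq.mpr hmod⟩
  · rintro ⟨t, ht, rfl⟩
    exact zpowers_zpow_eq_zpowers_iff.mpr (Nat.Coprime.coprime_dvd_right (order_dvd_exponent x) ht)

theorem isPowerClosed_iff_forall_zpow_mem [Finite G] (C : Finset G) :
    IsPowerClosed C ↔ ∀ x ∈ C, ∀ t : ℤ, t.gcd (exponent G) = 1 → x ^ t ∈ C := by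
  constructor
  · intro h x hx t ht
    exact h x hx _ (zpow_mem_zpowers x t) (zpowers_eq_zpowers_iff_exists_zpow.mpr ⟨t, ht, rfl⟩)
  · rintro h x hx y - hyx
    obtain ⟨t, ht, rfl⟩ := zpowers_eq_zpowers_iff_exists_zpow.mp hyx
    exact h x hx t ht

theorem exists_pow_eq_zpow_of_gcd_eq_one (hG : exponent G ≠ 0) {t : ℤ}
    (ht : t.gcd (exponent G) = 1) :
    ∃ s : ℕ, s.Coprime (exponent G) ∧ ∀ x : G, x ^ t = x ^ s := by
  have : NeZero (exponent G) := ⟨hG⟩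
  refine ⟨(t : ZMod (exponent G)).val, ?_, fun x => ?_⟩
  · rw [Nat.Coprime, ← Int.gcd_natCast_natCast, ZMod.val_intCast, Int.gcd_emod, ht]
  · rw [← zpow_natCast, ZMod.val_intCast, ← zpow_eq_zpow_emod' t (pow_exponent_eq_one x)]

end PowerClosed

section CoprimePowers

variable {G : Type*} [CommGroup G]

theorem pow_injective_of_coprime_exponent {t : ℕ} (ht : t.Coprime (exponent G)) :
    Function.Injective fun x : G => x ^ t :=
  (injective_iff_map_eq_one (powMonoidHom t : G →* G)).mpr fun x hx =>
    orderOf_eq_one_iff.mp <|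
      Nat.eq_one_of_dvd_coprimes ht (orderOf_dvd_of_pow_eq_one hx) (order_dvd_exponent x)

theorem forall_image_pow_eq_iff_forall_zpow_mem [DecidableEq G] [Finite G] (C : Finset G) :
    (∀ t : ℕ, t.Coprime (exponent G) → C.image (· ^ t) = C) ↔
      ∀ x ∈ C, ∀ t : ℤ, t.gcd (exponent G) = 1 → x ^ t ∈ C := by
  constructor
  · intro h x hx t ht
    obtain ⟨s, hs, hts⟩ := exists_pow_eq_zpow_of_gcd_eq_one exponent_ne_zero_of_finite ht
    rw [hts, ← h s hs]
    exact Finset.mem_image_of_mem _ hx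
  · intro h t ht
    refine Finset.eq_of_subset_of_card_le ?_
      (Finset.card_image_of_injective C (pow_injective_of_coprime_exponent ht)).ge
    simpa [Finset.image_subset_iff] using fun x hx => h x hx t (by simpa using ht)

end CoprimePowers

namespace IsPrimitiveRoot

variable {L : Type*} [Field L] [CharZero L] {n : ℕ} {ζ η : L}

theorem aeval_eq_algebraMap_of_aeval_eq (hζ : IsPrimitiveRoot ζ n) (hn : 0 < n)
    (hη : IsPrimitiveRoot η n) {f : ℚ[X]} {q : ℚ} (hf : aeval ζ f = algebraMap ℚ L q) :
    aeval η f = algebraMap ℚ L q := by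
  have hdvd : minpoly ℚ η ∣ f - C q := by
    rw [← cyclotomic_eq_minpoly_rat hη hn, cyclotomic_eq_minpoly_rat hζ hn]
    exact minpoly.dvd ℚ ζ (by simp [hf])
  simpa [sub_eq_zero] using aeval_eq_zero_of_dvd_aeval_eq_zero hdvd (minpoly.aeval ℚ η)

/-- Reduced modulo `cyclotomic n ℚ`, `f - s` has degree below `φ n` but vanishes at all
`φ n` primitive roots. -/
theorem mem_range_algebraMap_of_forall_aeval_eq (hζ : IsPrimitiveRoot ζ n) (hn : 0 < n)
    {f : ℚ[X]} {s : L} (h : ∀ η, IsPrimitiveRoot η n → aeval η f = s) :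
    s ∈ Set.range (algebraMap ℚ L) := by
  set r := f %ₘ cyclotomic n ℚ
  have hr : r.map (algebraMap ℚ L) = C s := by
    apply eq_of_degree_sub_lt_of_eval_finset_eq (primitiveRoots n L)
    · rw [hζ.card_primitiveRoots]
      refine (degree_sub_le _ _).trans_lt (max_lt ?_ ?_)
      · rw [degree_map, ← degree_cyclotomic n ℚ]
        exact degree_modByMonic_lt f (cyclotomic.monic n ℚ)
      · exact degree_C_le.trans_lt (by exact_mod_cast Nat.totient_pos.mpr hn)
    · intro η hη
      have hη := (mem_primitiveRoots hn).mp hη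
      have hroot : aeval η (cyclotomic n ℚ) = 0 :=
        cyclotomic_eq_minpoly_rat hη hn ▸ minpoly.aeval ℚ η
      rw [eval_map_algebraMap, aeval_modByMonic_eq_self_of_root hroot, h η hη, eval_C]
  exact ⟨r.coeff 0, by simpa using congr_arg (coeff · 0) hr⟩

end IsPrimitiveRoot

theorem exists_intCast_eq_of_isIntegral {L : Type*} [Field L] [CharZero L] {x : L}
    (hx : IsIntegral ℤ x) (hq : x ∈ Set.range (algebraMap ℚ L)) : ∃ k : ℤ, x = k := by
  obtain ⟨q, rfl⟩ := hq
  obtain ⟨k, rfl⟩ := IsIntegrallyClosed.isIntegral_iff.mp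
    ((isIntegral_algebraMap_iff (algebraMap ℚ L).injective).mp hx)
  exact ⟨k, by simp⟩

theorem Matrix.spectrum_transpose {n R : Type*} [Fintype n] [DecidableEq n] [CommRing R]
    (A : Matrix n n R) : spectrum R Aᵀ = spectrum R A := by
  ext μ
  rw [mem_spectrum_iff_not_isUnit_eval_charpoly, mem_spectrum_iff_not_isUnit_eval_charpoly,
    charpoly_transpose]

theorem LinearMap.toMatrix_eq_diagonal {n R M : Type*} [Fintype n] [DecidableEq n] [CommRing R]
    [AddCommGroup M] [Module R M] (b : Module.Basis n R M) {f : M →ₗ[R] M} {d : n → R}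
    (h : ∀ i, f (b i) = d i • b i) : LinearMap.toMatrix b b f = diagonal d := by
  ext i j
  rw [LinearMap.toMatrix_apply, h, map_smul, b.repr_self, diagonal_apply]
  by_cases hij : i = j <;> simp [hij]

theorem Module.Basis.eq_of_dotProduct_eq {ι n R : Type*} [Fintype n] [CommRing R]
    (b : Module.Basis ι R (n → R)) {v w : n → R} (h : ∀ i, v ⬝ᵥ b i = w ⬝ᵥ b i) : v = w :=
  dotProduct_eq v w fun u =>
    LinearMap.congr_fun (b.ext (f₁ := dotProductBilin R R v) (f₂ := dotProductBilin R R w) h) u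

section Characters

variable (G : Type*) [CommGroup G] [Finite G]

theorem card_monoidHom_complex : Nat.card (G →* ℂ) = Nat.card G := by
  have : NeZero (exponent G : ℂ) := ⟨Nat.cast_ne_zero.mpr exponent_ne_zero_of_finite⟩
  rw [Nat.card_congr MonoidHom.toHomUnitsMulEquiv.toEquiv,
    CommGroup.card_monoidHom_of_hasEnoughRootsOfUnity]

instance : Finite (G →* ℂ) :=
  Nat.finite_of_card_ne_zero ((card_monoidHom_complex G).symm ▸ Nat.card_pos.ne')

noncomputable instance : Fintype (G →* ℂ) := .ofFinite _

noncomputable def complexCharBasis : Module.Basis (G →* ℂ) ℂ (G → ℂ) :=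
  have := Fintype.ofFinite G
  basisOfLinearIndependentOfCardEqFinrank (linearIndependent_monoidHom G ℂ) (by
    rw [Module.finrank_fintype_fun_eq_card, Fintype.card_eq_nat_card, Fintype.card_eq_nat_card,
      card_monoidHom_complex])

@[simp]
theorem coe_complexCharBasis : ⇑(complexCharBasis G) = ((⇑) : (G →* ℂ) → G → ℂ) := by
  rw [complexCharBasis, coe_basisOfLinearIndependentOfCardEqFinrank]

end Characters

section CharacterSums

variable {G : Type*} [CommGroup G] [Finite G]

theorem exists_aeval_pow_eq_sum_monoidHom {L : Type*} [Field L] [CharZero L] {ω : L}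
    (hω : IsPrimitiveRoot ω (exponent G)) (χ : G →* L) (C : Finset G) :
    ∃ f : ℚ[X], ∀ t : ℕ, aeval (ω ^ t) f = ∑ c ∈ C, χ (c ^ t) := by
  have : NeZero (exponent G) := ⟨exponent_ne_zero_of_finite⟩
  choose a _ ha using fun c : G =>
    hω.eq_pow_of_pow_eq_one (by rw [← map_pow, Monoid.pow_exponent_eq_one, map_one] : χ c ^ _ = 1)
  refine ⟨∑ c ∈ C, X ^ a c, fun t => ?_⟩
  simp only [map_sum, map_pow, aeval_X]
  exact Finset.sum_congr rfl fun c _ => by rw [pow_right_comm, ha]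

theorem isIntegral_sum_monoidHom {L : Type*} [CommRing L] (χ : G →* L) (C : Finset G) :
    IsIntegral ℤ (∑ c ∈ C, χ c) :=
  IsIntegral.sum _ fun c _ => IsIntegral.of_pow (exponent_pos.mpr ExponentExists.of_finite) (by
    rw [← map_pow, Monoid.pow_exponent_eq_one, map_one]
    exact isIntegral_one)

end CharacterSums

section Cayley

variable {G : Type*} [CommGroup G] [Fintype G] [DecidableEq G]

theorem Finset.eq_of_forall_sum_monoidHom_eq {C D : Finset G}
    (h : ∀ χ : G →* ℂ, ∑ d ∈ D, χ d = ∑ c ∈ C, χ c) : D = C := by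
  have hsum (E : Finset G) (χ : G →* ℂ) : (E : Set G).indicator 1 ⬝ᵥ ⇑χ = ∑ e ∈ E, χ e := by
    simp [dotProduct, Set.indicator_apply, Finset.sum_ite_mem]
  exact Finset.coe_inj.mp <| Set.indicator_one_inj ℂ <|
    (complexCharBasis G).eq_of_dotProduct_eq (by simpa [hsum] using h)

theorem cayleyAdj_transpose_mulVec (C : Finset G) (χ : G →* ℂ) :
    (cayleyAdj C)ᵀ *ᵥ ⇑χ = (∑ c ∈ C, χ c) • ⇑χ := by
  funext g
  simp only [mulVec, dotProduct, transpose_apply, cayleyAdj, ite_mul, one_mul, zero_mul,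
    Pi.smul_apply, smul_eq_mul]
  rw [← Equiv.sum_comp (Equiv.mulRight g)]
  simp [Finset.sum_ite_mem, Finset.sum_mul]

theorem spectrum_cayleyAdj (C : Finset G) :
    spectrum ℂ (cayleyAdj C) = Set.range fun χ : G →* ℂ => ∑ c ∈ C, χ c := by
  rw [← spectrum_transpose, ← spectrum_toLin',
    ← LinearMap.spectrum_toMatrix _ (complexCharBasis G),
    LinearMap.toMatrix_eq_diagonal _ (d := fun χ : G →* ℂ => ∑ c ∈ C, χ c), spectrum_diagonal]
  intro χ
  simp [cayleyAdj_transpose_mulVec]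

theorem forall_sum_monoidHom_int_iff (C : Finset G) :
    (∀ χ : G →* ℂ, ∃ k : ℤ, ∑ c ∈ C, χ c = k) ↔
      ∀ t : ℕ, t.Coprime (exponent G) → C.image (· ^ t) = C := by
  have : NeZero (exponent G) := ⟨exponent_ne_zero_of_finite⟩
  have hn : 0 < exponent G := exponent_pos.mpr ExponentExists.of_finite
  obtain ⟨ω, hω⟩ : ∃ ω : ℂ, IsPrimitiveRoot ω (exponent G) :=
    ⟨_, Complex.isPrimitiveRoot_exp _ exponent_ne_zero_of_finite⟩
  have hsum_image {t : ℕ} (ht : t.Coprime (exponent G)) (χ : G →* ℂ) :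
      ∑ d ∈ C.image (· ^ t), χ d = ∑ c ∈ C, χ (c ^ t) :=
    Finset.sum_image fun x _ y _ h => pow_injective_of_coprime_exponent ht h
  constructor
  · intro hint t ht
    refine Finset.eq_of_forall_sum_monoidHom_eq fun χ => ?_
    obtain ⟨k, hk⟩ := hint χ
    obtain ⟨f, hf⟩ := exists_aeval_pow_eq_sum_monoidHom hω χ C
    have hf1 : aeval ω f = algebraMap ℚ ℂ k := by simpa [hk] using hf 1
    rw [hsum_image ht, ← hf, hω.aeval_eq_algebraMap_of_aeval_eq hn (hω.pow_of_coprime t ht) hf1,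
      hk, map_intCast]
  · intro himage χ
    obtain ⟨f, hf⟩ := exists_aeval_pow_eq_sum_monoidHom hω χ C
    refine exists_intCast_eq_of_isIntegral (isIntegral_sum_monoidHom χ C)
      (hω.mem_range_algebraMap_of_forall_aeval_eq hn (f := f) fun η hη => ?_)
    obtain ⟨t, -, rfl⟩ := hω.eq_pow_of_pow_eq_one hη.pow_eq_one
    have ht := (hω.pow_iff_coprime hn t).mp hη
    rw [hf, ← hsum_image ht, himage t ht]

end Cayley

/-- Bridges–Mena: for a finite abelian group `G` and any `C ⊆ G`, all eigenvalues of
`Cay(G, C)` are integers iff `C` is power-closed (equivalently, closed under `x ↦ x ^ t`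
for all `t` coprime to the exponent of `G`). -/
theorem stmt12 {G : Type*} [CommGroup G] [Fintype G] [DecidableEq G] (C : Finset G) :
    ((∀ μ ∈ spectrum ℂ (cayleyAdj C), ∃ k : ℤ, μ = (k : ℂ)) ↔ IsPowerClosed C) ∧
    (IsPowerClosed C ↔
      ∀ x ∈ C, ∀ t : ℤ, Int.gcd t (Monoid.exponent G) = 1 → x ^ t ∈ C) := by
  refine ⟨?_, isPowerClosed_iff_forall_zpow_mem C⟩
  rw [isPowerClosed_iff_forall_zpow_mem, ← forall_image_pow_eq_iff_forall_zpow_mem,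
    ← forall_sum_monoidHom_int_iff, spectrum_cayleyAdj, Set.forall_mem_range]
end

section
/- Let G be a finite group of exponent m, C a union of G-conjugacy classes, and t an integer coprime to m. If Σ_{z∈C} Θ(z) is fixed by the automorphism σ_t of ℚ(ζ_m) (σ_t(ζ_m)=ζ_m^t) for every character Θ of G induced from a cyclic subgroup, and x^{it} ∈ C ⟺ x^i ∈ C for all proper divisors i of |x| with 1 < i < |x| and all x ∈ C, then x ∈ C implies x^t ∈ C. -/
noncomputable section
open IntermediateField

/-- `∑_{z ∈ C} Θ(z)` where `Θ` is the character of `G` induced from the character `θ` of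
the cyclic subgroup `⟨x⟩` with `θ(x ^ i) = ω ^ i` (`ω` a root of unity of order dividing
`|x|`), via the induced character formula. -/
def inducedCharSum {G : Type*} [Group G] [Fintype G] [DecidableEq G]
    (C : Finset G) (x : G) (ω : ℂ) : ℂ :=
  ∑ z ∈ C, (orderOf x : ℂ)⁻¹ *
    ∑ y : G, ∑ i ∈ Finset.range (orderOf x), if y⁻¹ * z * y = x ^ i then ω ^ i else 0

open Finset Polynomial

/-!
Let `n = |x|` and `a_i = #{(z, y) ∈ C × G | y⁻¹ z y = x ^ i}`. By the induced character formula,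
`∑_{z ∈ C} Θ(z) = p(ω)` for `Θ` induced from `θ(x) = ω`, where `p = n⁻¹ ∑_{i < n} a_i X^i ∈ ℚ[X]`.
Since `σ_t` acts on `ℚ(ζ)` by `ζ ↦ ζ^t`, invariance for `ω = η^k` (`η` a primitive `n`-th root of
unity) reads `p(η^{kt}) = p(η^k)` for all `k`. Discrete Fourier inversion, once with respect to
`η^t` and once with respect to `η`, turns this into `a_1 = a_{t mod n}`. As `a_1 > 0` (take
`(z, y) = (x, 1)`), some conjugate of `x ^ t` lies in `C`, hence so does `x ^ t`.
-/

theorem Nat.dvd_sub_one_mul_add_iff {n i : ℕ} (hi : i < n) (j : ℕ) :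
    n ∣ (n - 1) * j + i ↔ i = j % n := by
  have : NeZero n := ⟨by omega⟩
  rw [← ZMod.natCast_eq_zero_iff, ← Nat.mod_eq_of_lt hi, ← ZMod.natCast_eq_natCast_iff',
    Nat.mod_eq_of_lt hi]
  push_cast [Nat.one_le_iff_ne_zero.mpr (NeZero.ne n)]
  simp only [ZMod.natCast_self, zero_sub, neg_one_mul, neg_add_eq_zero]
  exact eq_comm

namespace IsPrimitiveRoot

variable {R : Type*} [CommRing R] [IsDomain R] {η : R} {n : ℕ}

theorem sum_range_pow_mul (hη : IsPrimitiveRoot η n) (a : ℕ) :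
    ∑ k ∈ range n, η ^ (k * a) = if n ∣ a then (n : R) else 0 := by
  simp_rw [mul_comm _ a, pow_mul]
  split_ifs with ha
  · simp [(hη.pow_eq_one_iff_dvd a).mpr ha]
  · have hne : η ^ a - 1 ≠ 0 := sub_ne_zero.mpr fun h => ha ((hη.pow_eq_one_iff_dvd a).mp h)
    refine (mul_eq_zero.mp ?_).resolve_right hne
    rw [geom_sum_mul, ← pow_mul, mul_comm, pow_mul, hη.pow_eq_one, one_pow, sub_self]

/-- Discrete Fourier inversion; `η ^ (n - 1)` plays the role of `η⁻¹`. -/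
theorem sum_pow_mul_eval_pow (hη : IsPrimitiveRoot η n) {p : R[X]} (hp : p.natDegree < n)
    (j : ℕ) :
    ∑ k ∈ range n, η ^ (k * ((n - 1) * j)) * p.eval (η ^ k) = n * p.coeff (j % n) := by
  have hj : j % n < n := Nat.mod_lt j (by omega)
  calc ∑ k ∈ range n, η ^ (k * ((n - 1) * j)) * p.eval (η ^ k)
      = ∑ i ∈ range n, p.coeff i * ∑ k ∈ range n, η ^ (k * ((n - 1) * j + i)) := by
        simp only [eval_eq_sum_range' hp, mul_sum]
        rw [sum_comm]
        refine sum_congr rfl fun i _ => sum_congr rfl fun k _ => ?_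
        rw [mul_add, pow_add, ← pow_mul]
        ring
    _ = n * p.coeff (j % n) := by
        simp only [hη.sum_range_pow_mul]
        rw [sum_eq_single_of_mem (j % n) (mem_range.mpr hj), mul_comm,
          if_pos ((Nat.dvd_sub_one_mul_add_iff hj j).mpr rfl)]
        intro i hi hij
        rw [if_neg (mt (Nat.dvd_sub_one_mul_add_iff (mem_range.mp hi) j).mp hij), mul_zero]

theorem coeff_one_eq_coeff_mod_of_eval_pow_mul_eq (hη : IsPrimitiveRoot η n) (hn : 1 < n)
    {t : ℕ} (ht : t.Coprime n) {p : R[X]} (hp : p.natDegree < n)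
    (hinv : ∀ k, p.eval (η ^ (k * t)) = p.eval (η ^ k)) :
    p.coeff 1 = p.coeff (t % n) := by
  have : NeZero n := ⟨by omega⟩
  have := hη.neZero'
  have h1 := (hη.pow_of_coprime t ht).sum_pow_mul_eval_pow hp 1
  have h2 := hη.sum_pow_mul_eval_pow hp t
  rw [Nat.mod_eq_of_lt hn] at h1
  refine mul_left_cancel₀ (NeZero.ne (n : R)) (h1.symm.trans (Eq.trans ?_ h2))
  refine sum_congr rfl fun k _ => ?_
  rw [← pow_mul, ← pow_mul, mul_comm t k, hinv]
  ring_nf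

end IsPrimitiveRoot

namespace IntermediateField.AdjoinSimple

variable {F E : Type*} [Field F] [Field E] [Algebra F E] {α : E}

theorem aeval_pow_mem (p : F[X]) (j : ℕ) : aeval (α ^ j) p ∈ F⟮α⟯ := by
  rw [← coe_gen F α, ← SubmonoidClass.coe_pow, aeval_coe]
  exact SetLike.coe_mem _

theorem coe_algEquiv_apply_of_eq_aeval_pow (σ : F⟮α⟯ ≃ₐ[F] F⟮α⟯) {t : ℕ}
    (hσ : (σ (gen F α) : E) = α ^ t) {β : E} (hβ : β ∈ F⟮α⟯) {p : F[X]} {j : ℕ}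
    (h : β = aeval (α ^ j) p) :
    (σ ⟨β, hβ⟩ : E) = aeval (α ^ (j * t)) p := by
  subst h
  have hgen : (⟨_, hβ⟩ : F⟮α⟯) = aeval (gen F α ^ j) p := by
    ext
    rw [← aeval_coe]
    rfl
  rw [hgen, ← aeval_algHom_apply, map_pow, ← aeval_coe, SubmonoidClass.coe_pow, hσ, ← pow_mul,
    mul_comm]

end IntermediateField.AdjoinSimple

section InducedCharPoly

variable {G : Type*} [Group G] [Fintype G] [DecidableEq G]

def conjPairs (C : Finset G) (g : G) : Finset (G × G) :=
  (C ×ˢ univ).filter fun p => p.2⁻¹ * p.1 * p.2 = g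

theorem mem_of_conjPairs_nonempty {C : Finset G} (hC : ∀ g ∈ C, ∀ h : G, h * g * h⁻¹ ∈ C)
    {g : G} (h : (conjPairs C g).Nonempty) : g ∈ C := by
  obtain ⟨⟨z, y⟩, hzy⟩ := h
  simp only [conjPairs, mem_filter, mem_product, mem_univ, and_true] at hzy
  rw [← hzy.2]
  simpa using hC z hzy.1 y⁻¹

theorem conjPairs_self_nonempty {C : Finset G} {x : G} (hx : x ∈ C) : (conjPairs C x).Nonempty :=
  ⟨(x, 1), by simp [conjPairs, hx]⟩

def inducedCharPoly (C : Finset G) (x : G) : ℚ[X] :=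
  ∑ i ∈ range (orderOf x), monomial i ((#(conjPairs C (x ^ i)) : ℚ) / orderOf x)

theorem natDegree_inducedCharPoly_lt (C : Finset G) (x : G) :
    (inducedCharPoly C x).natDegree < orderOf x := by
  refine Nat.lt_of_le_pred (orderOf_pos x) (natDegree_sum_le_of_forall_le _ _ fun i hi => ?_)
  exact (natDegree_monomial_le _).trans (Nat.le_pred_of_lt (mem_range.mp hi))

theorem coeff_inducedCharPoly (C : Finset G) (x : G) {i : ℕ} (hi : i < orderOf x) :
    (inducedCharPoly C x).coeff i = #(conjPairs C (x ^ i)) / orderOf x := by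
  simp [inducedCharPoly, coeff_monomial, hi]

theorem inducedCharSum_eq_aeval (C : Finset G) (x : G) (ω : ℂ) :
    inducedCharSum C x ω = aeval ω (inducedCharPoly C x) := by
  calc inducedCharSum C x ω
      = (orderOf x : ℂ)⁻¹ * ∑ i ∈ range (orderOf x),
          ∑ p ∈ C ×ˢ univ, if p.2⁻¹ * p.1 * p.2 = x ^ i then ω ^ i else 0 := by
        rw [inducedCharSum, ← mul_sum]
        simp only [sum_product]
        exact congrArg _ ((sum_congr rfl fun _ _ => sum_comm).trans sum_comm)
    _ = aeval ω (inducedCharPoly C x) := by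
        simp [inducedCharPoly, conjPairs, aeval_monomial, sum_ite, mul_sum, div_eq_inv_mul,
          mul_assoc]

theorem aeval_inducedCharPoly_pow_mul_eq {C : Finset G} {x : G} {ζ : ℂ}
    (σ : ℚ⟮ζ⟯ ≃ₐ[ℚ] ℚ⟮ζ⟯) {t : ℕ} (hσ : (σ (AdjoinSimple.gen ℚ ζ) : ℂ) = ζ ^ t)
    (hfix : ∀ ω : ℂ, ω ^ orderOf x = 1 → ∀ hS : inducedCharSum C x ω ∈ ℚ⟮ζ⟯,
      (σ ⟨inducedCharSum C x ω, hS⟩ : ℂ) = inducedCharSum C x ω)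
    {d : ℕ} (hd : (ζ ^ d) ^ orderOf x = 1) :
    aeval (ζ ^ (d * t)) (inducedCharPoly C x) = aeval (ζ ^ d) (inducedCharPoly C x) := by
  have hS : inducedCharSum C x (ζ ^ d) ∈ ℚ⟮ζ⟯ := by
    rw [inducedCharSum_eq_aeval]
    exact AdjoinSimple.aeval_pow_mem _ _
  calc aeval (ζ ^ (d * t)) (inducedCharPoly C x)
      = (σ ⟨inducedCharSum C x (ζ ^ d), hS⟩ : ℂ) :=
        (AdjoinSimple.coe_algEquiv_apply_of_eq_aeval_pow σ hσ hS
          (inducedCharSum_eq_aeval C x _)).symm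
    _ = aeval (ζ ^ d) (inducedCharPoly C x) :=
        (hfix _ hd hS).trans (inducedCharSum_eq_aeval C x _)

theorem pow_mem_of_coeff_inducedCharPoly_eq {C : Finset G}
    (hC : ∀ g ∈ C, ∀ h : G, h * g * h⁻¹ ∈ C) {x : G} (hx : x ∈ C) (hn : 1 < orderOf x)
    {i : ℕ} (hi : i < orderOf x)
    (h : (inducedCharPoly C x).coeff 1 = (inducedCharPoly C x).coeff i) : x ^ i ∈ C := by
  rw [coeff_inducedCharPoly C x hn, coeff_inducedCharPoly C x hi,
    div_left_inj' (by exact_mod_cast (orderOf_pos x).ne')] at h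
  have hcard : #(conjPairs C (x ^ 1)) = #(conjPairs C (x ^ i)) := by exact_mod_cast h
  refine mem_of_conjPairs_nonempty hC (card_pos.mp ?_)
  rw [← hcard, pow_one]
  exact card_pos.mpr (conjPairs_self_nonempty hx)

end InducedCharPoly

theorem stmt15_general {G : Type*} [Group G] [Fintype G] [DecidableEq G]
    (C : Finset G) (hC : ∀ g ∈ C, ∀ h : G, h * g * h⁻¹ ∈ C)
    (ζ : ℂ) (hζ : IsPrimitiveRoot ζ (Monoid.exponent G))
    (t : ℕ) (ht : Nat.Coprime t (Monoid.exponent G))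
    (σ : ℚ⟮ζ⟯ ≃ₐ[ℚ] ℚ⟮ζ⟯)
    (hσ : (σ ⟨ζ, IntermediateField.mem_adjoin_simple_self ℚ ζ⟩ : ℂ) = ζ ^ t)
    (hfix : ∀ (x : G) (ω : ℂ), ω ^ orderOf x = 1 →
      ∀ hS : inducedCharSum C x ω ∈ ℚ⟮ζ⟯,
        (σ ⟨inducedCharSum C x ω, hS⟩ : ℂ) = inducedCharSum C x ω) :
    ∀ x ∈ C, x ^ t ∈ C := by
  intro x hx
  obtain hn | hn : orderOf x = 1 ∨ 1 < orderOf x := by have := orderOf_pos x; omega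
  · simpa [orderOf_eq_one_iff.mp hn] using hx
  have hnm := Monoid.order_dvd_exponent x
  set d := Monoid.exponent G / orderOf x
  have hη : IsPrimitiveRoot (ζ ^ d) (orderOf x) :=
    hζ.pow (Monoid.exponent_pos.mpr .of_finite) (Nat.div_mul_cancel hnm).symm
  have hinv (k : ℕ) : ((inducedCharPoly C x).map (algebraMap ℚ ℂ)).eval ((ζ ^ d) ^ (k * t)) =
      ((inducedCharPoly C x).map (algebraMap ℚ ℂ)).eval ((ζ ^ d) ^ k) := by
    simp only [eval_map_algebraMap, ← pow_mul, ← mul_assoc]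
    refine aeval_inducedCharPoly_pow_mul_eq σ hσ (hfix x) ?_
    rw [pow_mul, pow_right_comm, hη.pow_eq_one, one_pow]
  have hcoeff := hη.coeff_one_eq_coeff_mod_of_eval_pow_mul_eq hn (ht.coprime_dvd_right hnm)
    (by simpa using natDegree_inducedCharPoly_lt C x) hinv
  rw [coeff_map, coeff_map, (algebraMap ℚ ℂ).injective.eq_iff] at hcoeff
  rw [← pow_mod_orderOf]
  exact pow_mem_of_coeff_inducedCharPoly_eq hC hx hn (Nat.mod_lt t (orderOf_pos x)) hcoeff

/-- The key inductive step in the proof of Theorem 2: if every sum `∑_{z ∈ C} Θ(z)` over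
characters `Θ` induced from cyclic subgroups is fixed by `σ_t`, and `x^{it} ∈ C ⟺ x^i ∈ C`
for all divisors `i` of `|x|` with `1 < i < |x|`, then `x ∈ C` implies `x ^ t ∈ C`. -/
theorem stmt15 {G : Type*} [Group G] [Fintype G] [DecidableEq G]
    (C : Finset G) (hC : ∀ g ∈ C, ∀ h : G, h * g * h⁻¹ ∈ C)
    (ζ : ℂ) (hζ : IsPrimitiveRoot ζ (Monoid.exponent G))
    (t : ℕ) (ht : Nat.Coprime t (Monoid.exponent G))
    (σ : ℚ⟮ζ⟯ ≃ₐ[ℚ] ℚ⟮ζ⟯)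
    (hσ : (σ ⟨ζ, IntermediateField.mem_adjoin_simple_self ℚ ζ⟩ : ℂ) = ζ ^ t)
    (hfix : ∀ (x : G) (ω : ℂ), ω ^ orderOf x = 1 →
      ∀ hS : inducedCharSum C x ω ∈ ℚ⟮ζ⟯,
        (σ ⟨inducedCharSum C x ω, hS⟩ : ℂ) = inducedCharSum C x ω)
    (hdiv : ∀ x ∈ C, ∀ i : ℕ, i ∣ orderOf x → 1 < i → i < orderOf x →
      (x ^ (i * t) ∈ C ↔ x ^ i ∈ C)) :
    ∀ x ∈ C, x ^ t ∈ C :=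
  stmt15_general C hC ζ hζ t ht σ hσ hfix
end
end

section
/- Let G be a finite group and C a union of conjugacy classes such that every eigenvalue of Cay(G,C) is an integer. Then Cay(G,C) is an undirected graph, i.e., C = C⁻¹. -/
open scoped Matrix.Norms.L2Operator in
noncomputable instance matrixCStarAlgebraAux {n : Type*} [Fintype n] [DecidableEq n] :
    CStarAlgebra (Matrix n n ℂ) where

/-- If `C` is a union of conjugacy classes and every eigenvalue of `Cay(G, C)` is an
integer, then `Cay(G, C)` is undirected, i.e. `C = C⁻¹`. -/
theorem stmt16 {G : Type*} [Group G] [Fintype G] [DecidableEq G] (C : Finset G)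
    (hC : ∀ g ∈ C, ∀ h : G, h * g * h⁻¹ ∈ C)
    (hint : ∀ μ ∈ spectrum ℂ (cayleyAdj C), ∃ k : ℤ, μ = (k : ℂ)) :
    ∀ g : G, g ∈ C ↔ g⁻¹ ∈ C := by
  classical
  have hconj : ∀ (x h : G), x ∈ C ↔ h * x * h⁻¹ ∈ C := by
    intro x h
    constructor
    · exact fun hx => hC x hx h
    · intro hx
      have := hC _ hx h⁻¹
      simpa [mul_assoc] using this
  set A := cayleyAdj C with hA
  have hstar : star A = A.transpose := by
    ext g h
    simp [Matrix.star_apply, hA, cayleyAdj, Matrix.transpose_apply,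
      apply_ite (starRingEnd ℂ)]
  have hcomm : A * A.transpose = A.transpose * A := by
    ext g h
    simp only [Matrix.mul_apply, Matrix.transpose_apply]
    refine Fintype.sum_equiv ⟨fun k => h * k⁻¹ * g, fun k => g * k⁻¹ * h, ?_, ?_⟩ _ _ ?_
    · intro k; group
    · intro k; group
    · intro k
      simp only [Equiv.coe_fn_mk, hA, cayleyAdj]
      have e1 : h * k⁻¹ * g * g⁻¹ = h * k⁻¹ := by group
      have e2 : h * k⁻¹ * g * h⁻¹ = (h * k⁻¹) * (g * k⁻¹) * (h * k⁻¹)⁻¹ := by group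
      have hiff : (g * k⁻¹ ∈ C) ↔ (h * k⁻¹ * g * h⁻¹ ∈ C) := by
        rw [e2]; exact hconj (g * k⁻¹) (h * k⁻¹)
      rw [e1, if_congr hiff rfl rfl, mul_comm]
  haveI hnormal : IsStarNormal A := by
    constructor
    show star A * A = A * star A
    rw [hstar]
    exact hcomm.symm
  have hspec : SpectrumRestricts A Complex.reCLM := by
    refine SpectrumRestricts.of_subset_range_algebraMap (f := Complex.reCLM)
      (fun r => Complex.ofReal_re r) (fun μ hμ => ?_)
    obtain ⟨k, rfl⟩ := hint μ hμ
    exact ⟨(k : ℝ), by push_cast; rfl⟩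
  have hsa : IsSelfAdjoint A := hspec.isSelfAdjoint A
  have key : ∀ g : G, (if g⁻¹ ∈ C then (1 : ℂ) else 0) = if g ∈ C then 1 else 0 := by
    intro g
    have h0 := congrFun (congrFun hsa.star_eq g) 1
    simpa [hA, cayleyAdj, Matrix.star_apply, apply_ite (starRingEnd ℂ)] using h0
  intro g
  have k := key g
  by_cases h1 : g⁻¹ ∈ C <;> by_cases h2 : g ∈ C <;> simp [h1, h2] at k ⊢
end
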